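/- arXiv:1102.1779 — 4 statements merged into one kernel-verified Lean document; each statement's English description precedes it below -/
import Mathlib

section
/- In ℚ[[z]], the identity (1/(1−z)) · (1 + ∑_{n≥0} 2^n z^{(n+1)^2}) = ∑_{m≥0} 2^{⌊√m⌋} z^m holds. -/
/-!
Multiplying by `1 - z` turns `∑ 2^{⌊√m⌋} z^m` into its difference sequence
`2^{⌊√m⌋} - 2^{⌊√(m-1)⌋}`, which vanishes unless `m = (n+1)^2`, where it is
`2^{n+1} - 2^n = 2^n`: exactly the coefficients of `1 + ∑ 2^n z^{(n+1)^2}`.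
-/

open PowerSeries

noncomputable instance : TopologicalSpace (PowerSeries ℚ) :=
  inferInstanceAs (TopologicalSpace ((Unit →₀ ℕ) → ℚ))

instance : T2Space (PowerSeries ℚ) :=
  inferInstanceAs (T2Space ((Unit →₀ ℕ) → ℚ))

namespace Nat

lemma injective_succ_sq : Function.Injective fun n : ℕ => (n + 1) ^ 2 := fun a b h => by
  simpa using h

lemma sqrt_succ_sq_sub_one (n : ℕ) : sqrt ((n + 1) ^ 2 - 1) = n := by
  rw [show (n + 1) ^ 2 - 1 = n ^ 2 + (n + n) by ring_nf; omega]
  exact sqrt_add_eq' n le_rfl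

lemma sqrt_sub_one_of_ne_succ_sq {m : ℕ} (hm : ∀ n, (n + 1) ^ 2 ≠ m) :
    sqrt (m - 1) = sqrt m := by
  have hsq : sqrt m ^ 2 ≠ m ∨ m = 0 := by
    rcases (sqrt m).eq_zero_or_eq_succ_pred with h | h
    · rw [h]; omega
    · exact .inl (h ▸ hm _)
  have hle := sqrt_le' m
  have hlt : m < (sqrt m + 1) ^ 2 := lt_succ_sqrt' m
  exact (eq_sqrt'.mpr (by omega)).symm

lemma extend_succ_sq_eq_sub_sqrt {G : Type*} [AddGroup G] (f : ℕ → G) :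
    Function.extend (fun n => (n + 1) ^ 2) (fun n => f (n + 1) - f n) 0 =
      fun m => f (sqrt m) - f (sqrt (m - 1)) := by
  ext m
  by_cases hm : ∃ n, (n + 1) ^ 2 = m
  · obtain ⟨n, rfl⟩ := hm
    rw [injective_succ_sq.extend_apply, sqrt_eq', sqrt_succ_sq_sub_one]
  · push Not at hm
    rw [Function.extend_apply' _ _ _ (not_exists.mpr hm), sqrt_sub_one_of_ne_succ_sq hm]
    simp

end Nat

namespace PowerSeries

-- At `m = 0` the truncated `m - 1` makes the difference vanish.
lemma one_sub_X_mul_mk {R : Type*} [Ring R] (g : ℕ → R) :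
    (1 - X) * mk g = C (g 0) + mk fun m => g m - g (m - 1) := by
  ext (_ | m) <;> simp [sub_mul, coeff_succ_X_mul]

open WithPiTopology in
lemma hasSum_C_mul_X_pow_of_injective {R : Type*} [Semiring R] [TopologicalSpace R]
    {e : ℕ → ℕ} (he : e.Injective) (a : ℕ → R) :
    HasSum (fun n => C (a n) * X ^ (e n)) (mk (Function.extend e a 0)) := by
  rw [hasSum_iff_hasSum_coeff]
  intro d
  simp only [coeff_C_mul_X_pow, coeff_mk]
  by_cases hd : ∃ n, e n = d
  · obtain ⟨n, rfl⟩ := hd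
    rw [he.extend_apply]
    convert hasSum_single n fun k hk => if_neg (he.ne hk).symm
    simp
  · rw [Function.extend_apply' _ _ _ hd]
    exact hasSum_zero.congr_fun fun k => if_neg fun h => hd ⟨k, h.symm⟩

end PowerSeries

/-- In `ℚ⟦z⟧`, `(1/(1-z)) * (1 + ∑_{n≥0} 2^n z^{(n+1)^2}) = ∑_{m≥0} 2^{⌊√m⌋} z^m`. -/
theorem growth_series_sqrt :
    ((1 - PowerSeries.X)⁻¹ : PowerSeries ℚ) *
        (1 + ∑' n : ℕ, PowerSeries.C (2 ^ n : ℚ) *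
          (PowerSeries.X : PowerSeries ℚ) ^ ((n + 1) ^ 2)) =
      PowerSeries.mk (fun m => (2 : ℚ) ^ (Nat.sqrt m)) := by
  have hgaps : HasSum (fun n : ℕ => C (2 ^ n : ℚ) * (X : PowerSeries ℚ) ^ ((n + 1) ^ 2))
      (mk fun m => (2 : ℚ) ^ Nat.sqrt m - 2 ^ Nat.sqrt (m - 1)) := by
    rw [← Nat.extend_succ_sq_eq_sub_sqrt]
    -- The topology above is definitionally Mathlib's `WithPiTopology` instance.
    refine (hasSum_C_mul_X_pow_of_injective Nat.injective_succ_sq _).congr_fun fun n => ?_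
    rw [pow_succ (2 : ℚ), mul_two, add_sub_cancel_right]
  have hdiff : (1 - X) * mk (fun m => (2 : ℚ) ^ Nat.sqrt m) =
      1 + mk fun m => (2 : ℚ) ^ Nat.sqrt m - 2 ^ Nat.sqrt (m - 1) := by
    simp [one_sub_X_mul_mk]
  rw [hgaps.tsum_eq, ← hdiff, ← mul_assoc, PowerSeries.inv_mul_cancel _ (by simp), one_mul]
end

section
/- For every positive integer m, the number of tuples (k, i, j) with k ≥ 1, 1 ≤ i ≤ j, and k·(1 + i + j) = m equals the coefficient of z^m in ∑_{j≥1} z^{3j}/((1 − z^j)(1 − z^{2j})) in ℚ[[z]]. -/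
/-!
Group the tuples `(k, i, j)` by the number `k` of blocks: `k` must divide `m`, and the pairs
`(i, j)` that remain are the shapes of the blocks `a b^i c^j` of length `m / k`. These are counted
by the block series `X³/((1 - X)(1 - X²)) = ∑_{1 ≤ i ≤ j} X^(1+i+j)`, and the `k`-th summand of the
series in the statement is this block series with `X` replaced by `X^k`, whose coefficient of
`X^m` is that of `X^(m/k)` in the block series when `k ∣ m` and `0` otherwise.
-/

open PowerSeries

open Finset

namespace PowerSeries

variable {K : Type*} [Field K]

theorem expand_inv (p : ℕ) (hp : p ≠ 0) (φ : K⟦X⟧) :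
    expand p hp φ⁻¹ = (expand p hp φ)⁻¹ := by
  by_cases h : constantCoeff φ = 0
  · rw [inv_eq_zero.mpr h, map_zero, eq_comm, inv_eq_zero, constantCoeff_expand, h]
  · rw [eq_inv_iff_mul_eq_one (by rwa [constantCoeff_expand]), ← map_mul,
      PowerSeries.inv_mul_cancel _ h, map_one]

theorem inv_one_sub_X : ((1 - X)⁻¹ : K⟦X⟧) = mk 1 :=
  ((eq_inv_iff_mul_eq_one (by simp)).mpr (mk_one_mul_one_sub_eq_one K)).symm

namespace WithPiTopology

open scoped PowerSeries.WithPiTopology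

variable {R : Type*} [CommRing R] [TopologicalSpace R]

theorem hasSum_expand_succ {F : R⟦X⟧} (hF : constantCoeff F = 0) :
    HasSum (fun k : ℕ => expand (k + 1) k.succ_ne_zero F)
      (mk fun m => ∑ d ∈ m.divisors, coeff (m / d) F) := by
  refine (hasSum_iff_hasSum_coeff R).mpr fun m => ?_
  set g : ℕ → R := fun d => if d ∣ m then coeff (m / d) F else 0
  have hg : ∀ d ∉ m.divisors, g d = 0 := by
    intro d hd
    rw [Nat.mem_divisors, not_and_or, not_not] at hd
    rcases hd with hd | rfl
    · simp [g, hd]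
    · simp [g, hF]
  have hg_zero : ∀ d ∉ Set.range Nat.succ, g d = 0 := by
    intro d hd
    obtain rfl : d = 0 := by simpa [Nat.exists_eq_add_one_of_ne_zero] using hd
    exact hg 0 (by simp)
  have hsum : ∑ d ∈ m.divisors, coeff (m / d) F = ∑ d ∈ m.divisors, g d :=
    sum_congr rfl fun d hd => (if_pos (Nat.dvd_of_mem_divisors hd)).symm
  simp only [coeff_expand, coeff_mk, hsum]
  exact (Nat.succ_injective.hasSum_iff hg_zero).mpr (hasSum_sum_of_ne_finset_zero hg)

end WithPiTopology

end PowerSeries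

def blockShapes (n : ℕ) : Finset (ℕ × ℕ) :=
  (Icc 1 n ×ˢ Icc 1 n).filter fun p => p.1 ≤ p.2 ∧ 1 + p.1 + p.2 = n

theorem mem_blockShapes {n : ℕ} {p : ℕ × ℕ} :
    p ∈ blockShapes n ↔ 1 ≤ p.1 ∧ p.1 ≤ p.2 ∧ 1 + p.1 + p.2 = n := by
  simp only [blockShapes, mem_filter, mem_product, mem_Icc]
  omega

section BlockSeries

variable (K : Type*) [Field K]

noncomputable def blockSeries : K⟦X⟧ := X ^ 3 * (1 - X)⁻¹ * (1 - X ^ 2)⁻¹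

theorem expand_blockSeries (p : ℕ) (hp : p ≠ 0) :
    expand p hp (blockSeries K) = X ^ (3 * p) * (1 - X ^ p)⁻¹ * (1 - X ^ (2 * p))⁻¹ := by
  simp only [blockSeries, map_mul, map_pow, expand_inv, map_sub, map_one, expand_X, ← pow_mul,
    mul_comm p]

theorem constantCoeff_blockSeries : constantCoeff (blockSeries K) = 0 := by
  simp [blockSeries]

theorem coeff_blockSeries (n : ℕ) : coeff n (blockSeries K) = #(blockShapes n) := by
  have h2 : ((1 - X ^ 2)⁻¹ : K⟦X⟧) = expand 2 two_ne_zero (1 - X)⁻¹ := by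
    rw [expand_inv, map_sub, map_one, expand_X]
  rw [blockSeries, mul_assoc, coeff_X_pow_mul', h2, inv_one_sub_X]
  split_ifs with hn
  · simp only [coeff_mul, coeff_mk, Pi.one_apply, one_mul, coeff_expand]
    rw [sum_boole]
    congr 1
    -- `X^3 · X^a · X^c` with `c` even is the block with `i = 1 + c / 2` and `j = i + a`
    refine card_nbij' (fun p => (1 + p.2 / 2, 1 + p.2 / 2 + p.1))
      (fun q => (q.2 - q.1, 2 * (q.1 - 1))) ?_ ?_ ?_ ?_
    all_goals
      rintro ⟨_, _⟩ h
      simp only [coe_filter, mem_coe, Set.mem_ofPred_eq, HasAntidiagonal.mem_antidiagonal,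
        mem_blockShapes, Prod.mk.injEq] at h ⊢
      omega
  · rw [card_eq_zero.mpr, Nat.cast_zero]
    refine eq_empty_iff_forall_notMem.mpr fun p hp => ?_
    rw [mem_blockShapes] at hp
    omega

end BlockSeries

theorem natCard_serialTuples_eq_sum_divisors (m : ℕ) :
    Nat.card {t : ℕ × ℕ × ℕ //
        1 ≤ t.1 ∧ 1 ≤ t.2.1 ∧ t.2.1 ≤ t.2.2 ∧ t.1 * (1 + t.2.1 + t.2.2) = m} =
      ∑ k ∈ m.divisors, #(blockShapes (m / k)) := by
  set T := (m.divisors.sigma fun k => blockShapes (m / k)).map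
    (Equiv.sigmaEquivProd ℕ (ℕ × ℕ)).toEmbedding
  have hT : ∀ t : ℕ × ℕ × ℕ,
      1 ≤ t.1 ∧ 1 ≤ t.2.1 ∧ t.2.1 ≤ t.2.2 ∧ t.1 * (1 + t.2.1 + t.2.2) = m ↔ t ∈ T := by
    rintro ⟨k, i, j⟩
    simp only [T, mem_map_equiv, Equiv.sigmaEquivProd_symm_apply, mem_sigma, Nat.mem_divisors,
      mem_blockShapes]
    constructor
    · rintro ⟨hk, hi, hij, rfl⟩
      rw [Nat.mul_div_cancel_left _ hk]
      exact ⟨⟨dvd_mul_right _ _, by positivity⟩, hi, hij, rfl⟩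
    · rintro ⟨⟨hdvd, hm⟩, hi, hij, hblock⟩
      have hk : 0 < k := Nat.pos_of_dvd_of_pos hdvd (Nat.pos_of_ne_zero hm)
      exact ⟨hk, hi, hij, by rw [hblock, Nat.mul_div_cancel' hdvd]⟩
  rw [Nat.card_congr (Equiv.subtypeEquivRight hT), Nat.card_eq_finsetCard, card_map, card_sigma]

theorem serial_language_coeff_general (m : ℕ) :
    (Nat.card {t : ℕ × ℕ × ℕ //
        1 ≤ t.1 ∧ 1 ≤ t.2.1 ∧ t.2.1 ≤ t.2.2 ∧ t.1 * (1 + t.2.1 + t.2.2) = m} : ℚ) =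
      PowerSeries.coeff m
        (∑' j : ℕ,
          (PowerSeries.X : PowerSeries ℚ) ^ (3 * (j + 1)) *
            ((1 - PowerSeries.X ^ (j + 1))⁻¹ : PowerSeries ℚ) *
            ((1 - PowerSeries.X ^ (2 * (j + 1)))⁻¹ : PowerSeries ℚ)) := by
  -- the topology on `ℚ⟦X⟧` in the statement is, up to unfolding, the `WithPiTopology` one
  have := WithPiTopology.instT2Space ℚ
  have h := WithPiTopology.hasSum_expand_succ (constantCoeff_blockSeries ℚ)
  simp only [expand_blockSeries] at h
  refine Eq.trans ?_ (congrArg (coeff m) h.tsum_eq).symm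
  rw [coeff_mk, natCard_serialTuples_eq_sum_divisors]
  simp [coeff_blockSeries]

/-- For every positive integer `m`, the number of tuples `(k, i, j)` with `k ≥ 1`,
`1 ≤ i ≤ j`, and `k(1 + i + j) = m` equals the coefficient of `z^m` in
`∑_{j≥1} z^{3j}/((1 - z^j)(1 - z^{2j}))` in `ℚ⟦z⟧`. -/
theorem serial_language_coeff (m : ℕ) (hm : 0 < m) :
    (Nat.card {t : ℕ × ℕ × ℕ //
        1 ≤ t.1 ∧ 1 ≤ t.2.1 ∧ t.2.1 ≤ t.2.2 ∧ t.1 * (1 + t.2.1 + t.2.2) = m} : ℚ) =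
      PowerSeries.coeff m
        (∑' j : ℕ,
          (PowerSeries.X : PowerSeries ℚ) ^ (3 * (j + 1)) *
            ((1 - PowerSeries.X ^ (j + 1))⁻¹ : PowerSeries ℚ) *
            ((1 - PowerSeries.X ^ (2 * (j + 1)))⁻¹ : PowerSeries ℚ)) :=
  serial_language_coeff_general m
end

section
/- In ℚ[[z]], the sum ∑_{j≥1} z^j / ∏_{n=1}^{j} (1 − z^n) equals ∑_{m≥1} p(m) z^m, where p(m) is the number of partitions of m. -/
open PowerSeries

/-!
Let `P_j` be the generating function of partitions all of whose parts are at most `j`, so that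
`P_j = ∏_{n=1}^{j} (1 - z^n)⁻¹`. Then `P_{j+1} (1 - z^{j+1}) = P_j`, i.e. the `j`-th summand
`z^{j+1} P_{j+1}` equals `P_{j+1} - P_j`, and the series telescopes. Its limit is
`∑_m p(m) z^m - P_0 = ∑_m p(m) z^m - 1`, since the coefficient of `z^m` in `P_j` equals `p(m)`
as soon as `j ≥ m`.
-/

open Finset Nat.Partition

section
open scoped PowerSeries.WithPiTopology

theorem PowerSeries.WithPiTopology.hasSum_succ_sub_of_coeff_eq {R : Type*} [Ring R]
    [TopologicalSpace R] {Q : ℕ → R⟦X⟧} {L : R⟦X⟧}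
    (h : ∀ d j, d ≤ j → coeff d (Q j) = coeff d L) :
    HasSum (fun j ↦ Q (j + 1) - Q j) (L - Q 0) := by
  rw [hasSum_iff_hasSum_coeff]
  intro d
  have hvanish : ∀ j ∉ range d, coeff d (Q (j + 1) - Q j) = 0 := by
    intro j hj
    rw [mem_range, not_lt] at hj
    rw [map_sub, h d j hj, h d (j + 1) (by omega), sub_self]
  convert hasSum_sum_of_ne_finset_zero (L := SummationFilter.unconditional ℕ) hvanish using 1
  simp_rw [map_sub, sum_range_sub (fun j ↦ coeff d (Q j)), h d d le_rfl]

namespace Nat.Partition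

noncomputable def restrictedLESeries (R : Type*) [Semiring R] (j : ℕ) : R⟦X⟧ :=
  PowerSeries.mk fun n ↦ #(restricted n (· ≤ j))

theorem restricted_le_eq_univ {n j : ℕ} (h : n ≤ j) : restricted n (· ≤ j) = univ :=
  filter_true_of_mem fun _ _ _ hi ↦ (le_of_mem_parts hi).trans h

theorem coeff_restrictedLESeries_of_le (R : Type*) [Semiring R] {n j : ℕ} (h : n ≤ j) :
    coeff n (restrictedLESeries R j) = Fintype.card n.Partition := by
  rw [restrictedLESeries, coeff_mk, restricted_le_eq_univ h, Finset.card_univ]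

variable (R : Type*) [CommRing R]

theorem restrictedLESeries_mul_prod_one_sub_X_pow (j : ℕ) :
    restrictedLESeries R j * ∏ i ∈ range j, (1 - X ^ (i + 1)) = 1 := by
  -- The identity is algebraic; the discrete topology only serves to apply the infinite product.
  let : TopologicalSpace R := ⊥
  have : DiscreteTopology R := ⟨rfl⟩
  have hfactor : ∀ i ∉ range j,
      (if i + 1 ≤ j then ∑' k : ℕ, (X : R⟦X⟧) ^ ((i + 1) * k) else 1) = 1 := by
    intro i hi
    rw [mem_range, not_lt] at hi
    rw [if_neg (by omega)]
  rw [restrictedLESeries, (hasProd_powerSeriesMk_card_restricted R (· ≤ j)).unique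
    (hasProd_prod_of_ne_finset_one hfactor), ← prod_mul_distrib]
  refine prod_eq_one fun i hi ↦ ?_
  rw [if_pos (show i + 1 ≤ j from mem_range.1 hi), mul_comm]
  simp_rw [pow_mul]
  exact WithPiTopology.one_sub_mul_tsum_pow_of_constantCoeff_eq_zero (by simp)

theorem X_pow_mul_restrictedLESeries (j : ℕ) :
    X ^ (j + 1) * restrictedLESeries R (j + 1) =
      restrictedLESeries R (j + 1) - restrictedLESeries R j := by
  have hj := restrictedLESeries_mul_prod_one_sub_X_pow R j
  have hj1 := restrictedLESeries_mul_prod_one_sub_X_pow R (j + 1)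
  rw [prod_range_succ] at hj1
  linear_combination (-restrictedLESeries R j) * hj1 +
    restrictedLESeries R (j + 1) * (1 - X ^ (j + 1)) * hj

theorem inv_prod_one_sub_X_pow_eq_restrictedLESeries (K : Type*) [Field K] (j : ℕ) :
    (∏ i ∈ range j, (1 - X ^ (i + 1) : K⟦X⟧))⁻¹ = restrictedLESeries K j :=
  (PowerSeries.inv_eq_iff_mul_eq_one (by simp)).2
    (restrictedLESeries_mul_prod_one_sub_X_pow K j)

end Nat.Partition

end

/-- In `ℚ⟦z⟧`, `∑_{j≥1} z^j / ∏_{n=1}^{j} (1 - z^n) = ∑_{m≥1} p(m) z^m`, where `p(m)` is the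
number of partitions of `m`. -/
theorem partition_series :
    (∑' j : ℕ, (PowerSeries.X : PowerSeries ℚ) ^ (j + 1) *
        ((∏ n ∈ Finset.range (j + 1), (1 - PowerSeries.X ^ (n + 1)))⁻¹ : PowerSeries ℚ)) =
      PowerSeries.mk
        (fun m => if m = 0 then 0 else (Fintype.card (Nat.Partition m) : ℚ)) := by
  have hsum := WithPiTopology.hasSum_succ_sub_of_coeff_eq (Q := restrictedLESeries ℚ)
    (L := PowerSeries.mk fun n ↦ (Fintype.card n.Partition : ℚ))
    fun d j h ↦ by rw [coeff_restrictedLESeries_of_le ℚ h, coeff_mk]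
  simp_rw [← X_pow_mul_restrictedLESeries, ← inv_prod_one_sub_X_pow_eq_restrictedLESeries,
    prod_range_zero, inv_one] at hsum
  refine (open scoped PowerSeries.WithPiTopology in hsum.tsum_eq).trans ?_
  ext (_ | m) <;> simp
end

section
/- For every integer n ≥ 4, the number of quadruples (i, j, k, l) of positive integers with i + j + k + l = n and (i = k or j = l) equals the coefficient of z^n in z^4(1 + 3z)/((1 − z)^3 (1 + z)^2) in ℚ[[z]]. -/
/-!
A quadruple `(i, j, k, l)` stands for the word `a^i b^j a^k b^l`. By inclusion–exclusion the count
is `2 A(n) - D(n)`, where `A(n)` counts the words with `i = k` (the swap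
`(i, j, k, l) ↦ (j, i, l, k)` shows that `j = l` gives the same count) and `D(n)` those with both.
Splitting off the words with `i = k = 1` gives `A(n + 2) = A(n) + (n - 1)`, so `A` is quadratic on
each residue class mod 2, while `D(2a + 2) = a` and `D` vanishes at odd `n`. The resulting closed
form `(m + 1)(2m + 5 - (-1)^m)/4` at `n = m + 4` is checked against the rational function by
multiplying out its denominator.
-/

open PowerSeries Finset

def positiveQuadruples (n : ℕ) : Finset (ℕ × ℕ × ℕ × ℕ) :=
  {t ∈ Icc 1 n ×ˢ Icc 1 n ×ˢ Icc 1 n ×ˢ Icc 1 n | t.1 + t.2.1 + t.2.2.1 + t.2.2.2 = n}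

lemma mem_positiveQuadruples {n : ℕ} {t : ℕ × ℕ × ℕ × ℕ} :
    t ∈ positiveQuadruples n ↔
      1 ≤ t.1 ∧ 1 ≤ t.2.1 ∧ 1 ≤ t.2.2.1 ∧ 1 ≤ t.2.2.2 ∧ t.1 + t.2.1 + t.2.2.1 + t.2.2.2 = n := by
  simp only [positiveQuadruples, mem_filter, mem_product, mem_Icc]
  omega

lemma positiveQuadruples_eq_empty {n : ℕ} (hn : n < 4) : positiveQuadruples n = ∅ := by
  ext t
  simp only [mem_positiveQuadruples, notMem_empty, iff_false]
  omega

def equalABlocks (n : ℕ) : Finset (ℕ × ℕ × ℕ × ℕ) := {t ∈ positiveQuadruples n | t.1 = t.2.2.1}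

def equalBBlocks (n : ℕ) : Finset (ℕ × ℕ × ℕ × ℕ) := {t ∈ positiveQuadruples n | t.2.1 = t.2.2.2}

lemma card_equalBBlocks (n : ℕ) : #(equalBBlocks n) = #(equalABlocks n) := by
  let swap : ℕ × ℕ × ℕ × ℕ → ℕ × ℕ × ℕ × ℕ := fun t => (t.2.1, t.1, t.2.2.2, t.2.2.1)
  apply card_nbij' swap swap <;> intro t h <;>
    simp only [swap, mem_coe, equalABlocks, equalBBlocks, mem_filter,
      mem_positiveQuadruples] at h ⊢ <;> omega

lemma card_equalABlocks_add_two (n : ℕ) :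
    #(equalABlocks (n + 2)) = #(equalABlocks n) + (n - 1) := by
  rw [← card_filter_add_card_filter_not (fun t => t.1 = 1), add_comm]
  congr 1
  · apply card_nbij' (fun t => (t.1 - 1, t.2.1, t.2.2.1 - 1, t.2.2.2))
      (fun t => (t.1 + 1, t.2.1, t.2.2.1 + 1, t.2.2.2)) <;> intro t h <;>
      simp only [mem_coe, equalABlocks, mem_filter, mem_positiveQuadruples, Prod.ext_iff,
        and_true, true_and] at h ⊢ <;> omega
  · refine (card_nbij' (t := Icc 1 (n - 1)) (fun t => t.2.1) (fun j => (1, j, 1, n - j))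
      ?_ ?_ ?_ ?_).trans (Nat.card_Icc 1 (n - 1)) <;> intro t h <;>
      simp only [mem_coe, equalABlocks, mem_filter, mem_positiveQuadruples, mem_Icc,
        Prod.ext_iff, and_true, true_and] at h ⊢ <;> omega

lemma card_equalABlocks_even_odd (a : ℕ) :
    #(equalABlocks (2 * a + 2)) = a * a ∧ #(equalABlocks (2 * a + 3)) = a * (a + 1) := by
  induction a with
  | zero => simp [equalABlocks, positiveQuadruples_eq_empty]
  | succ a ih =>
    rw [show 2 * (a + 1) + 2 = 2 * a + 2 + 2 by ring, show 2 * (a + 1) + 3 = 2 * a + 3 + 2 by ring,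
      card_equalABlocks_add_two (2 * a + 2), card_equalABlocks_add_two (2 * a + 3), ih.1, ih.2]
    constructor <;> ring_nf <;> omega

lemma card_equalABlocks_inter_equalBBlocks_even (a : ℕ) :
    #(equalABlocks (2 * a + 2) ∩ equalBBlocks (2 * a + 2)) = a := by
  refine (card_nbij' (t := Icc 1 a) (fun t => t.1) (fun i => (i, a + 1 - i, i, a + 1 - i))
    ?_ ?_ ?_ ?_).trans (Nat.card_Icc 1 a) <;> intro t h <;>
    simp only [mem_coe, equalABlocks, equalBBlocks, mem_inter, mem_filter, mem_positiveQuadruples,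
      mem_Icc, Prod.ext_iff, and_true, true_and] at h ⊢ <;> omega

lemma equalABlocks_inter_equalBBlocks_odd (a : ℕ) :
    equalABlocks (2 * a + 3) ∩ equalBBlocks (2 * a + 3) = ∅ := by
  ext t
  simp only [equalABlocks, equalBBlocks, mem_inter, mem_filter, mem_positiveQuadruples,
    notMem_empty, iff_false]
  omega

lemma card_equalABlocks_union_add_four (m : ℕ) :
    (#(equalABlocks (m + 4) ∪ equalBBlocks (m + 4)) : ℚ) =
      (m + 1) * (2 * m + 5 - (-1) ^ m) / 4 := by
  have incl_excl := card_union_add_card_inter (equalABlocks (m + 4)) (equalBBlocks (m + 4))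
  rw [card_equalBBlocks] at incl_excl
  obtain ⟨a, rfl | rfl⟩ := Nat.even_or_odd' m
  · rw [show 2 * a + 4 = 2 * (a + 1) + 2 by ring] at incl_excl ⊢
    rw [(card_equalABlocks_even_odd (a + 1)).1, card_equalABlocks_inter_equalBBlocks_even]
      at incl_excl
    qify at incl_excl
    push_cast [pow_succ, pow_mul]
    linear_combination incl_excl
  · rw [show 2 * a + 1 + 4 = 2 * (a + 1) + 3 by ring] at incl_excl ⊢
    rw [(card_equalABlocks_even_odd (a + 1)).2, equalABlocks_inter_equalBBlocks_odd, card_empty]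
      at incl_excl
    qify at incl_excl
    push_cast [pow_succ, pow_mul]
    linear_combination incl_excl

lemma mk_eq_X_pow_mul_mk {R : Type*} [Semiring R] {f : ℕ → R} {d : ℕ} (hf : ∀ n < d, f n = 0) :
    PowerSeries.mk f = X ^ d * PowerSeries.mk (fun n => f (n + d)) := by
  ext n
  rw [coeff_X_pow_mul', coeff_mk, coeff_mk]
  split_ifs with h
  · rw [Nat.sub_add_cancel h]
  · exact hf n (by omega)

lemma mk_quasiPolynomial_mul :
    (PowerSeries.mk fun m : ℕ => ((m : ℚ) + 1) * (2 * m + 5 - (-1) ^ m) / 4) *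
      ((1 - X) ^ 3 * (1 + X) ^ 2) = 1 + 3 * X := by
  set f := PowerSeries.mk fun m : ℕ => ((m : ℚ) + 1) * (2 * m + 5 - (-1) ^ m) / 4
  have expand : f * ((1 - X) ^ 3 * (1 + X) ^ 2) =
      f - X * f - (2 : ℚ) • (X ^ 2 * f) + (2 : ℚ) • (X ^ 3 * f) + X ^ 4 * f - X ^ 5 * f := by
    simp only [smul_eq_C_mul, map_ofNat]; ring
  rw [expand, show (3 * X : ℚ⟦X⟧) = (3 : ℚ) • X by simp only [smul_eq_C_mul, map_ofNat]]
  ext m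
  rcases m with _ | _ | _ | _ | _ | m <;> simp [coeff_X_pow_mul', f, coeff_one, coeff_X] <;> ring

theorem mk_card_equalABlocks_union_mul :
    (PowerSeries.mk fun n => (#(equalABlocks n ∪ equalBBlocks n) : ℚ)) *
      ((1 - X) ^ 3 * (1 + X) ^ 2) = X ^ 4 * (1 + 3 * X) := by
  have vanish (n : ℕ) (hn : n < 4) : (#(equalABlocks n ∪ equalBBlocks n) : ℚ) = 0 := by
    simp [equalABlocks, equalBBlocks, positiveQuadruples_eq_empty hn]
  rw [mk_eq_X_pow_mul_mk vanish, mul_assoc]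
  simp_rw [card_equalABlocks_union_add_four]
  rw [mk_quasiPolynomial_mul]

theorem ambiguous_language_coeff_general (n : ℕ) :
    (Nat.card {t : ℕ × ℕ × ℕ × ℕ //
        1 ≤ t.1 ∧ 1 ≤ t.2.1 ∧ 1 ≤ t.2.2.1 ∧ 1 ≤ t.2.2.2 ∧
        t.1 + t.2.1 + t.2.2.1 + t.2.2.2 = n ∧
        (t.1 = t.2.2.1 ∨ t.2.1 = t.2.2.2)} : ℚ) =
      PowerSeries.coeff n
        ((PowerSeries.X : PowerSeries ℚ) ^ 4 * (1 + 3 * PowerSeries.X) *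
          (((1 - PowerSeries.X) ^ 3 * (1 + PowerSeries.X) ^ 2)⁻¹ : PowerSeries ℚ)) := by
  rw [Nat.subtype_card (equalABlocks n ∪ equalBBlocks n) (fun t => ?_),
    ← (eq_mul_inv_iff_mul_eq (by simp)).2 mk_card_equalABlocks_union_mul, coeff_mk]
  simp only [mem_union, equalABlocks, equalBBlocks, mem_filter, mem_positiveQuadruples]
  tauto

/-- For every `n ≥ 4`, the number of quadruples `(i, j, k, l)` of positive integers with
`i + j + k + l = n` and (`i = k` or `j = l`) equals the coefficient of `z^n` in
`z^4(1 + 3z)/((1 - z)^3 (1 + z)^2)` in `ℚ⟦z⟧`. -/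
theorem ambiguous_language_coeff (n : ℕ) (hn : 4 ≤ n) :
    (Nat.card {t : ℕ × ℕ × ℕ × ℕ //
        1 ≤ t.1 ∧ 1 ≤ t.2.1 ∧ 1 ≤ t.2.2.1 ∧ 1 ≤ t.2.2.2 ∧
        t.1 + t.2.1 + t.2.2.1 + t.2.2.2 = n ∧
        (t.1 = t.2.2.1 ∨ t.2.1 = t.2.2.2)} : ℚ) =
      PowerSeries.coeff n
        ((PowerSeries.X : PowerSeries ℚ) ^ 4 * (1 + 3 * PowerSeries.X) *
          (((1 - PowerSeries.X) ^ 3 * (1 + PowerSeries.X) ^ 2)⁻¹ : PowerSeries ℚ)) :=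
  ambiguous_language_coeff_general n
end
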